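/- arXiv:2404.10521 — 2 statements merged into one kernel-verified Lean document; each statement's English description precedes it below -/
import Mathlib

section
/- Let A be a commutative unitary ring and let G be an infinite subgroup of the additive group (A,+). Then there are infinitely many irreducible λ-quiddities over G; in fact, for every g ∈ G with g ∉ {−1,1}, the tuple (0,g,0,−g) is an irreducible λ-quiddity over G. -/
/-- The matrix `[[a, -1], [1, 0]]`. -/
def mMat {A : Type*} [CommRing A] (a : A) : Matrix (Fin 2) (Fin 2) A := !![a, -1; 1, 0]

/-- `M_n(a₁, …, aₙ) = mMat aₙ * ⋯ * mMat a₁`, for the tuple given as a list `[a₁, …, aₙ]`. -/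
def mProd {A : Type*} [CommRing A] (l : List A) : Matrix (Fin 2) (Fin 2) A :=
  ((l.map mMat).reverse).prod

/-- The sum `(a₁,…,aₙ) ⊕ (b₁,…,b_m) = (a₁+b_m, a₂,…,a_{n−1}, aₙ+b₁, b₂,…,b_{m−1})`. -/
def oplus {A : Type*} [CommRing A] (a b : List A) : List A :=
  (a.headD 0 + b.getLastD 0) ::
    (a.dropLast.tail ++ (a.getLastD 0 + b.headD 0) :: b.dropLast.tail)

/-- Two tuples are equivalent if one is a cyclic rotation of the other or of its reversal. -/
def TupEquiv {A : Type*} (a b : List A) : Prop :=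
  (∃ k, b = a.rotate k) ∨ (∃ k, b = a.reverse.rotate k)

/-- A λ-quiddity over `R ⊆ A`: all entries lie in `R` and `M_n(a₁,…,aₙ) = ± Id`. -/
def IsQuiddity {A : Type*} [CommRing A] (R : Set A) (c : List A) : Prop :=
  (∀ x ∈ c, x ∈ R) ∧ (mProd c = 1 ∨ mProd c = -1)

/-- A λ-quiddity `c` over `R` is reducible if `c ∼ a ⊕ b` with `a ∈ R^m`, `m ≥ 3`,
and `b` a λ-quiddity over `R` of size `l ≥ 3`. -/
def IsReducible {A : Type*} [CommRing A] (R : Set A) (c : List A) : Prop :=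
  ∃ a b : List A, 3 ≤ a.length ∧ 3 ≤ b.length ∧ (∀ x ∈ a, x ∈ R) ∧
    IsQuiddity R b ∧ TupEquiv c (oplus a b)

/-- An irreducible λ-quiddity over `R`: a λ-quiddity of size `≥ 3` which is not reducible. -/
def IrreducibleQuiddity {A : Type*} [CommRing A] (R : Set A) (c : List A) : Prop :=
  IsQuiddity R c ∧ 3 ≤ c.length ∧ ¬ IsReducible R c

/-- The continuant `K_i(a₁,…,a_i)`, determinant of the tridiagonal matrix with diagonal
`a₁,…,a_i` and off-diagonal entries `1`; `K₀ = 1`. -/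
def cont {A : Type*} [CommRing A] : List A → A
  | [] => 1
  | [a] => a
  | a :: b :: l => a * cont (b :: l) - cont l

theorem quid3_aux {A : Type*} [CommRing A] (x y z : A)
    (h : mProd [x, y, z] = 1 ∨ mProd [x, y, z] = -1) : y = 1 ∨ y = -1 := by
  rcases h with h | h <;> [right; left] <;>
  · have := congr_fun (congr_fun h 1) 1
    simpa [mProd, mMat, Matrix.mul_apply, Fin.sum_univ_two, neg_eq_iff_eq_neg] using this

/-- For an infinite additive subgroup `G` of a commutative ring `A`, there are infinitely
many irreducible λ-quiddities over `G`; indeed for every `g ∈ G` with `g ∉ {−1,1}`, the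
tuple `(0,g,0,−g)` is an irreducible λ-quiddity over `G`. -/
theorem stmt15 {A : Type*} [CommRing A] (G : AddSubgroup A)
    (hG : (G : Set A).Infinite) :
    {c : List A | IrreducibleQuiddity (G : Set A) c}.Infinite ∧
    (∀ g ∈ G, g ≠ -1 → g ≠ 1 →
      IrreducibleQuiddity (G : Set A) [0, g, 0, -g]) := by
  have hnt : Nontrivial A := by
    by_contra h
    rw [not_nontrivial_iff_subsingleton] at h
    exact hG (Set.toFinite _)
  have key : ∀ g ∈ G, g ≠ -1 → g ≠ 1 →
      IrreducibleQuiddity (G : Set A) [0, g, 0, -g] := by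
    intro g hg hgm1 hg1
    refine ⟨⟨?_, Or.inl ?_⟩, by norm_num, ?_⟩
    · intro x hx
      simp only [List.mem_cons, List.not_mem_nil, or_false] at hx
      rcases hx with rfl | rfl | rfl | rfl
      · exact G.zero_mem
      · exact hg
      · exact G.zero_mem
      · exact G.neg_mem hg
    · simp [mProd, mMat, Matrix.mul_fin_two, Matrix.one_fin_two]
    · rintro ⟨a, b, ha3, hb3, haG, hbq, hequiv⟩
      -- length of oplus a b is 4
      have hlen : (oplus a b).length = 4 := by
        rcases hequiv with ⟨k, hk⟩ | ⟨k, hk⟩ <;> rw [hk] <;>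
          simp [List.length_rotate]
      have hlen' : (oplus a b).length = a.length + b.length - 2 := by
        simp only [oplus, List.length_cons, List.length_append, List.length_tail,
          List.length_dropLast]
        omega
      have hal : a.length = 3 := by omega
      have hbl : b.length = 3 := by omega
      obtain ⟨a1, a2, a3, rfl⟩ := List.length_eq_three.mp hal
      obtain ⟨b1, b2, b3, rfl⟩ := List.length_eq_three.mp hbl
      have hb2 : b2 = 1 ∨ b2 = -1 := quid3_aux b1 b2 b3 hbq.2
      have hmem : b2 ∈ oplus [a1, a2, a3] [b1, b2, b3] := by simp [oplus]
      have hmem' : b2 ∈ [0, g, 0, -g] := by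
        rcases hequiv with ⟨k, hk⟩ | ⟨k, hk⟩ <;> rw [hk] at hmem
        · exact (List.mem_rotate).mp hmem
        · exact List.mem_reverse.mp ((List.mem_rotate).mp hmem)
      simp only [List.mem_cons, List.not_mem_nil, or_false] at hmem'
      rcases hmem' with rfl | rfl | rfl | rfl <;> rcases hb2 with h | h
      · exact one_ne_zero h.symm
      · exact one_ne_zero (by linear_combination h)
      · exact hg1 h
      · exact hgm1 h
      · exact one_ne_zero h.symm
      · exact one_ne_zero (by linear_combination h)
      · exact hgm1 (by linear_combination -h)
      · exact hg1 (by linear_combination -h)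
  refine ⟨?_, key⟩
  have hS : ((G : Set A) \ {-1, 1}).Infinite :=
    hG.diff ((Set.finite_singleton (1 : A)).insert (-1))
  have himg : ((fun g : A => [0, g, 0, -g]) '' ((G : Set A) \ {-1, 1})).Infinite := by
    refine hS.image ?_
    intro x _ y _ hxy
    simp only [List.cons.injEq] at hxy
    exact hxy.2.1
  refine himg.mono ?_
  rintro _ ⟨g, ⟨hg, hg'⟩, rfl⟩
  simp only [Set.mem_insert_iff, Set.mem_singleton_iff, not_or] at hg'
  exact key g hg hg'.1 hg'.2
end

section
/- Let A be a commutative unitary ring, n ≥ 1, (a₁,…,aₙ) ∈ Aⁿ, and suppose Kₙ(a₁,…,aₙ) = ε with ε ∈ {1,−1}. Set x = ε·Kₙ₋₁(a₂,…,aₙ) and y = ε·Kₙ₋₁(a₁,…,aₙ₋₁). Then M_{n+2}(x,a₁,…,aₙ,y) = −ε·Id. -/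
lemma mProd_cons {A : Type*} [CommRing A] (x : A) (l : List A) :
    mProd (x :: l) = mProd l * mMat x := by
  simp [mProd]

lemma mProd_concat {A : Type*} [CommRing A] (y : A) (l : List A) :
    mProd (l ++ [y]) = mMat y * mProd l := by
  simp [mProd]

lemma det_mMat {A : Type*} [CommRing A] (a : A) : (mMat a).det = 1 := by
  simp [mMat, Matrix.det_fin_two_of]

lemma det_mProd {A : Type*} [CommRing A] (l : List A) : (mProd l).det = 1 := by
  induction l with
  | nil => simp [mProd]
  | cons x l ih => rw [mProd_cons, Matrix.det_mul, ih, det_mMat, one_mul]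

lemma mProd_formula {A : Type*} [CommRing A] (l : List A) : ∀ x y : A,
    mProd (x :: y :: l) =
      !![cont (x :: y :: l), -cont (y :: l);
         cont ((x :: y :: l).dropLast), -cont ((y :: l).dropLast)] := by
  induction l with
  | nil =>
      intro x y
      simp only [mProd, List.map, List.reverse, cont, List.dropLast]
      simp [mMat, Matrix.mul_fin_two, cont]
      ring_nf
  | cons z l ih =>
      intro x y
      rw [mProd_cons, ih y z]
      simp only [List.dropLast_cons₂, cont, mMat, Matrix.mul_fin_two]
      ext i j
      fin_cases i <;> fin_cases j <;> simp [cont] <;> ring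

/-- If `Kₙ(a₁,…,aₙ) = ε ∈ {1,−1}`, then with `x = ε·Kₙ₋₁(a₂,…,aₙ)` and
`y = ε·Kₙ₋₁(a₁,…,aₙ₋₁)` we have `M_{n+2}(x,a₁,…,aₙ,y) = −ε·Id`. -/
theorem stmt16 {A : Type*} [CommRing A] (a : List A) (ha : a ≠ [])
    (ε : A) (hε : ε = 1 ∨ ε = -1) (hK : cont a = ε) :
    mProd ((ε * cont a.tail) :: (a ++ [ε * cont a.dropLast])) =
      -(ε • (1 : Matrix (Fin 2) (Fin 2) A)) := by
  rw [mProd_cons, mProd_concat]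
  match a, hK with
  | [], _ => exact absurd rfl ha
  | [a₁], hK =>
      have h1 : a₁ = ε := hK
      rcases hε with rfl | rfl <;> rcases h1 with rfl <;>
      · ext i j
        fin_cases i <;> fin_cases j <;>
          simp [mMat, cont, mProd, Matrix.mul_fin_two, Matrix.one_apply]
  | x :: y :: l, hK =>
      rw [mProd_formula]
      have hdet : (mProd (x :: y :: l)).det = 1 := det_mProd _
      rw [mProd_formula, Matrix.det_fin_two_of, hK, List.dropLast_cons₂] at hdet
      rw [show (x :: y :: l).tail = y :: l from rfl, hK]
      rcases hε with rfl | rfl <;>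
      · ext i j
        fin_cases i <;> fin_cases j <;>
          simp [mMat, Matrix.mul_fin_two, Matrix.one_apply]
        all_goals first
            | linear_combination hdet
            | linear_combination -hdet
end
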